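/- Assume Assumption (F) and let H : [0,∞) → (0,∞) satisfy ∫_ℝ F(e^{√a t}/H(a)) dN(t) = 0 for all a ≥ 0, where N is the standard Gaussian (normal N(0,1)) probability measure on ℝ. Let a ≥ 0, b ∈ ℝ, x > 0, define f(x,z) = ∫_ℝ F((x/z)e^{b+√a t}) dN(t) for z > 0, and set z* = x e^{b} H(a). Then −(∂f/∂x)(x, z*) / (x·(∂²f/∂x²)(x, z*)) = G(a), where G(a) = H(a)·∫_ℝ e^{√a t} F'(e^{√a t}/H(a)) dN(t) / (−∫_ℝ e^{2√a t} F''(e^{√a t}/H(a)) dN(t)). -/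

import Mathlib

open MeasureTheory ProbabilityTheory Set Real Metric

lemma integrable_exp_gauss (c : ℝ) :
    Integrable (fun t => Real.exp (c * t)) (gaussianReal 0 1) := by
  rw [gaussianReal_of_var_ne_zero _ one_ne_zero,
    integrable_withDensity_iff (measurable_gaussianPDF _ _)
      (Filter.Eventually.of_forall fun _ => ENNReal.ofReal_lt_top)]
  have h : ∀ t : ℝ, Real.exp (c * t) * (gaussianPDF 0 1 t).toReal
      = (Real.sqrt (2 * π))⁻¹ * Real.exp (c ^ 2 / 2) *
        Real.exp (-(1/2) * (t - c) ^ 2) := by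
    intro t
    rw [gaussianPDF, ENNReal.toReal_ofReal (gaussianPDFReal_nonneg _ _ _),
      gaussianPDFReal]
    simp only [NNReal.coe_one, mul_one, sub_zero]
    rw [mul_comm, mul_assoc, ← Real.exp_add, mul_comm ((√(2 * π))⁻¹), mul_assoc,
      ← Real.exp_add]
    ring_nf
  simp only [h]
  exact ((integrable_exp_neg_mul_sq (by norm_num : (0:ℝ) < 1/2)).comp_sub_right c).const_mul _

lemma key(k m : ℝ) (G G' : ℝ → ℝ)
    (hd : ∀ y > (0:ℝ), HasDerivAt G (G' y) y)
    (hGc : ContinuousOn G (Ioi 0)) (hG'c : ContinuousOn G' (Ioi 0))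
    (L γ : ℝ) (hγ : 0 < γ)
    (hG : ∀ y > (0:ℝ), |G y| ≤ L * (1 + y ^ γ + y ^ (-γ)))
    (hG' : ∀ y > (0:ℝ), |G' y| ≤ L * (1 + y ^ γ + y ^ (-γ)))
    (s : ℝ) (hs : 0 < s) :
    Integrable (fun t => Real.exp ((m+k)*t) * G' (s * Real.exp (k*t))) (gaussianReal 0 1) ∧
    HasDerivAt (fun u => ∫ t, Real.exp (m*t) * G (u * Real.exp (k*t)) ∂(gaussianReal 0 1))
      (∫ t, Real.exp ((m+k)*t) * G' (s * Real.exp (k*t)) ∂(gaussianReal 0 1)) s := by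
  have hL : 0 ≤ L := by
    have := (abs_nonneg (G 1)).trans (hG 1 one_pos)
    nlinarith [Real.rpow_natCast (1:ℝ) 1, Real.one_rpow γ, Real.one_rpow (-γ)]
  -- continuity helper
  have hcont : ∀ (J : ℝ → ℝ), ContinuousOn J (Ioi 0) → ∀ (c u : ℝ), 0 < u →
      Continuous fun t => Real.exp (c*t) * J (u * Real.exp (k*t)) := by
    intro J hJ c u hu
    have h1 : Continuous fun t : ℝ => u * Real.exp (k*t) := by fun_prop
    have h2 : Continuous fun t => J (u * Real.exp (k*t)) :=
      hJ.comp_continuous h1 fun t => mem_Ioi.mpr (by positivity)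
    exact (by fun_prop : Continuous fun t : ℝ => Real.exp (c*t)).mul h2
  -- growth bound helper
  have hbd : ∀ (J : ℝ → ℝ), (∀ y > (0:ℝ), |J y| ≤ L * (1 + y ^ γ + y ^ (-γ))) →
      ∀ (c u t : ℝ), 0 < u →
      |Real.exp (c*t) * J (u * Real.exp (k*t))| ≤
        L * Real.exp (c*t) + (L * u ^ γ) * Real.exp ((c + γ*k)*t)
          + (L * u ^ (-γ)) * Real.exp ((c - γ*k)*t) := by
    intro J hJ c u t hu
    have he : (0:ℝ) < Real.exp (k*t) := Real.exp_pos _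
    have harg : 0 < u * Real.exp (k*t) := by positivity
    have h1 : |Real.exp (c*t) * J (u * Real.exp (k*t))|
        = Real.exp (c*t) * |J (u * Real.exp (k*t))| := by
      rw [abs_mul, abs_of_pos (Real.exp_pos _)]
    rw [h1]
    have h2 := hJ _ harg
    have hr1 : (u * Real.exp (k*t)) ^ γ = u ^ γ * Real.exp (γ*(k*t)) := by
      rw [Real.mul_rpow hu.le he.le, ← Real.exp_mul, mul_comm (k*t) γ]
    have hr2 : (u * Real.exp (k*t)) ^ (-γ) = u ^ (-γ) * Real.exp (-γ*(k*t)) := by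
      rw [Real.mul_rpow hu.le he.le, ← Real.exp_mul, mul_comm (k*t) (-γ)]
    rw [hr1, hr2] at h2
    have key : Real.exp (c*t) * |J (u * Real.exp (k*t))| ≤
        Real.exp (c*t) * (L * (1 + u ^ γ * Real.exp (γ*(k*t)) + u ^ (-γ) * Real.exp (-γ*(k*t)))) :=
      mul_le_mul_of_nonneg_left h2 (Real.exp_pos _).le
    refine key.trans (le_of_eq ?_)
    rw [show (c + γ*k)*t = c*t + γ*(k*t) by ring, show (c - γ*k)*t = c*t + -γ*(k*t) by ring,
      Real.exp_add, Real.exp_add]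
    ring
  -- integrability of dominators
  have hintbd : ∀ (c C1 C2 c1 c2 : ℝ), Integrable (fun t =>
      L * Real.exp (c*t) + C1 * Real.exp (c1*t) + C2 * Real.exp (c2*t)) (gaussianReal 0 1) := by
    intro c C1 C2 c1 c2
    exact (((integrable_exp_gauss c).const_mul L).add
      ((integrable_exp_gauss c1).const_mul C1)).add ((integrable_exp_gauss c2).const_mul C2)
  have main := hasDerivAt_integral_of_dominated_loc_of_deriv_le (μ := gaussianReal 0 1)
    (F := fun u t => Real.exp (m*t) * G (u * Real.exp (k*t)))
    (F' := fun u t => Real.exp ((m+k)*t) * G' (u * Real.exp (k*t)))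
    (x₀ := s) (s := ball s (s/2))
    (bound := fun t => L * Real.exp ((m+k)*t) + (L * (2*s) ^ γ) * Real.exp (((m+k) + γ*k)*t)
          + (L * (s/2) ^ (-γ)) * Real.exp (((m+k) - γ*k)*t))
    (ball_mem_nhds _ (by positivity))
    (by
      filter_upwards [Ioi_mem_nhds hs] with u hu
      exact (hcont G hGc m u hu).aestronglyMeasurable)
    (by
      refine (hintbd m (L * s ^ γ) (L * s ^ (-γ)) (m + γ*k) (m - γ*k)).mono
        ((hcont G hGc m s hs).aestronglyMeasurable) ?_
      filter_upwards with t
      rw [Real.norm_eq_abs]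
      refine (hbd G hG m s t hs).trans ?_
      rw [Real.norm_eq_abs]
      exact le_abs_self _)
    ((hcont G' hG'c (m+k) s hs).aestronglyMeasurable)
    (by
      filter_upwards with t u hu
      have hu1 : 0 < u := by
        have := abs_sub_lt_iff.mp (mem_ball_iff_norm.mp hu)
        linarith [this.2]
      have hu2 : u ≤ 2*s := by
        have := abs_sub_lt_iff.mp (mem_ball_iff_norm.mp hu)
        linarith [this.1]
      have hu3 : s/2 ≤ u := by
        have := abs_sub_lt_iff.mp (mem_ball_iff_norm.mp hu)
        linarith [this.2]
      rw [Real.norm_eq_abs]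
      refine (hbd G' hG' (m+k) u t hu1).trans ?_
      have e1 : u ^ γ ≤ (2*s) ^ γ := Real.rpow_le_rpow hu1.le hu2 hγ.le
      have e2 : u ^ (-γ) ≤ (s/2) ^ (-γ) := by
        rw [Real.rpow_neg hu1.le, Real.rpow_neg (by positivity)]
        exact inv_anti₀ (Real.rpow_pos_of_pos (by positivity) γ)
          (Real.rpow_le_rpow (by positivity) hu3 hγ.le)
      have p1 : (0:ℝ) < Real.exp (((m+k) + γ*k)*t) := Real.exp_pos _
      have p2 : (0:ℝ) < Real.exp (((m+k) - γ*k)*t) := Real.exp_pos _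
      nlinarith [mul_le_mul_of_nonneg_right e1 p1.le, mul_le_mul_of_nonneg_right e2 p2.le,
        mul_le_mul_of_nonneg_left (mul_le_mul_of_nonneg_right e1 p1.le) hL,
        mul_le_mul_of_nonneg_left (mul_le_mul_of_nonneg_right e2 p2.le) hL])
    (hintbd (m+k) _ _ _ _)
    (by
      filter_upwards with t u hu
      have hu1 : 0 < u := by
        have := abs_sub_lt_iff.mp (mem_ball_iff_norm.mp hu)
        linarith [this.2]
      have harg : 0 < u * Real.exp (k*t) := by positivity
      have h1 : HasDerivAt (fun u : ℝ => u * Real.exp (k*t)) (Real.exp (k*t)) u :=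
        hasDerivAt_mul_const _
      have h2 := ((hd _ harg).comp u h1).const_mul (Real.exp (m*t))
      refine h2.congr_deriv ?_
      rw [show (m+k)*t = m*t + k*t by ring, Real.exp_add]
      ring)
  exact ⟨main.1, main.2⟩

/-- Lemma A.3 of the paper: the equilibrium relative risk tolerance
`-f_x/(x f_xx)` evaluated at the implicit objective value `z* = x e^b H(a)`
equals `G(a)`. -/
theorem stmt_17 (F F' F'' : ℝ → ℝ)
    (hdF : ∀ x > (0:ℝ), HasDerivAt F (F' x) x)
    (hdF' : ∀ x > (0:ℝ), HasDerivAt F' (F'' x) x)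
    (hF''cont : ContinuousOn F'' (Ioi 0))
    (hF1 : F 1 = 0)
    (hF'pos : ∀ x > (0:ℝ), 0 < F' x)
    (hF''neg : ∀ x > (0:ℝ), F'' x < 0)
    (hgrowth : ∃ L : ℝ, 0 < L ∧ ∃ γ : ℝ, 0 < γ ∧ ∀ x > (0:ℝ),
      |F x| + |F' x| + |F'' x| ≤ L * (1 + x ^ γ + x ^ (-γ)))
    (H : ℝ → ℝ)
    (hHpos : ∀ a ∈ Ici (0:ℝ), 0 < H a)
    (hHroot : ∀ a ∈ Ici (0:ℝ),
      (∫ t, F (Real.exp (Real.sqrt a * t) / H a) ∂(gaussianReal 0 1)) = 0)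
    (a : ℝ) (ha : 0 ≤ a) (b : ℝ) (x : ℝ) (hx : 0 < x) :
    -(deriv (fun x' : ℝ =>
        ∫ t, F ((x' / (x * Real.exp b * H a)) * Real.exp (b + Real.sqrt a * t))
          ∂(gaussianReal 0 1)) x) /
      (x * deriv (deriv (fun x' : ℝ =>
        ∫ t, F ((x' / (x * Real.exp b * H a)) * Real.exp (b + Real.sqrt a * t))
          ∂(gaussianReal 0 1))) x) =
    H a * (∫ t, Real.exp (Real.sqrt a * t) *
        F' (Real.exp (Real.sqrt a * t) / H a) ∂(gaussianReal 0 1)) /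
      (-(∫ t, Real.exp (2 * Real.sqrt a * t) *
        F'' (Real.exp (Real.sqrt a * t) / H a) ∂(gaussianReal 0 1))) := by
  obtain ⟨L, hL, γ, hγ, hgr⟩ := hgrowth
  set μ := gaussianReal 0 1 with hμ
  set k := Real.sqrt a with hk
  have hH : 0 < H a := hHpos a ha
  set c : ℝ := H a with hc
  have hcpos : 0 < c := hH
  -- individual growth bounds
  have hGF : ∀ y > (0:ℝ), |F y| ≤ L * (1 + y ^ γ + y ^ (-γ)) := fun y hy => by
    have := hgr y hy; have := abs_nonneg (F' y); have := abs_nonneg (F'' y); linarith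
  have hGF' : ∀ y > (0:ℝ), |F' y| ≤ L * (1 + y ^ γ + y ^ (-γ)) := fun y hy => by
    have := hgr y hy; have := abs_nonneg (F y); have := abs_nonneg (F'' y); linarith
  have hGF'' : ∀ y > (0:ℝ), |F'' y| ≤ L * (1 + y ^ γ + y ^ (-γ)) := fun y hy => by
    have := hgr y hy; have := abs_nonneg (F y); have := abs_nonneg (F' y); linarith
  have hFc : ContinuousOn F (Ioi 0) :=
    fun y hy => ((hdF y hy).continuousAt).continuousWithinAt
  have hF'c : ContinuousOn F' (Ioi 0) :=
    fun y hy => ((hdF' y hy).continuousAt).continuousWithinAt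
  -- derivative of Φ
  have hΦd : ∀ u > (0:ℝ), HasDerivAt (fun u => ∫ t, F (u * Real.exp (k*t)) ∂μ)
      (∫ t, Real.exp (k*t) * F' (u * Real.exp (k*t)) ∂μ) u := by
    intro u hu
    have h := (key k 0 F F' hdF hFc hF'c L γ hγ hGF hGF' u hu).2
    simpa only [zero_mul, Real.exp_zero, one_mul, zero_add] using h
  have hΦ1d : ∀ u > (0:ℝ), HasDerivAt (fun u => ∫ t, Real.exp (k*t) * F' (u * Real.exp (k*t)) ∂μ)
      (∫ t, Real.exp ((k+k)*t) * F'' (u * Real.exp (k*t)) ∂μ) u := by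
    intro u hu
    exact (key k k F' F'' hdF' hF'c hF''cont L γ hγ hGF' hGF'' u hu).2
  -- rewrite the statement function
  have harg : ∀ x' t : ℝ, (x' / (x * Real.exp b * c)) * Real.exp (b + k*t)
      = x' / (x * c) * Real.exp (k*t) := by
    intro x' t
    rw [Real.exp_add]
    field_simp
  have hfun : (fun x' : ℝ => ∫ t, F ((x' / (x * Real.exp b * c)) * Real.exp (b + k*t)) ∂μ)
      = fun x' : ℝ => ∫ t, F (x' / (x * c) * Real.exp (k*t)) ∂μ := by
    funext x'
    congr 1
    funext t
    rw [harg]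
  rw [hfun]
  -- derivative of the outer composition
  have hlin : ∀ x' : ℝ, HasDerivAt (fun y : ℝ => y / (x * c)) ((x*c)⁻¹) x' := by
    intro x'
    simpa [one_div] using (hasDerivAt_id x').div_const (x*c)
  have hg : ∀ x' > (0:ℝ), HasDerivAt (fun x' : ℝ => ∫ t, F (x' / (x * c) * Real.exp (k*t)) ∂μ)
      ((∫ t, Real.exp (k*t) * F' (x' / (x*c) * Real.exp (k*t)) ∂μ) * (x*c)⁻¹) x' := by
    intro x' hx'
    exact (hΦd _ (by positivity)).comp x' (hlin x')
  have hd1 : deriv (fun x' : ℝ => ∫ t, F (x' / (x * c) * Real.exp (k*t)) ∂μ) x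
      = (∫ t, Real.exp (k*t) * F' (x / (x*c) * Real.exp (k*t)) ∂μ) * (x*c)⁻¹ :=
    (hg x hx).deriv
  have hEq : deriv (fun x' : ℝ => ∫ t, F (x' / (x * c) * Real.exp (k*t)) ∂μ)
      =ᶠ[nhds x] fun x' =>
        (∫ t, Real.exp (k*t) * F' (x' / (x*c) * Real.exp (k*t)) ∂μ) * (x*c)⁻¹ := by
    filter_upwards [Ioi_mem_nhds hx] with y hy
    exact (hg y hy).deriv
  have hd2 : deriv (deriv (fun x' : ℝ => ∫ t, F (x' / (x * c) * Real.exp (k*t)) ∂μ)) x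
      = (∫ t, Real.exp ((k+k)*t) * F'' (x / (x*c) * Real.exp (k*t)) ∂μ) * (x*c)⁻¹ * (x*c)⁻¹ := by
    rw [hEq.deriv_eq]
    exact (((hΦ1d _ (by positivity)).comp x (hlin x)).mul_const ((x*c)⁻¹)).deriv
  rw [hd1, hd2]
  have hs0 : x / (x*c) = c⁻¹ := by field_simp
  rw [hs0]
  -- identify integrals
  have hI1 : (∫ t, Real.exp (k*t) * F' (c⁻¹ * Real.exp (k*t)) ∂μ)
      = ∫ t, Real.exp (k*t) * F' (Real.exp (k*t) / c) ∂μ := by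
    congr 1
    funext t
    rw [inv_mul_eq_div]
  have hI2 : (∫ t, Real.exp ((k+k)*t) * F'' (c⁻¹ * Real.exp (k*t)) ∂μ)
      = ∫ t, Real.exp (2*k*t) * F'' (Real.exp (k*t) / c) ∂μ := by
    congr 1
    funext t
    rw [inv_mul_eq_div, show (k+k)*t = 2*k*t by ring]
  rw [hI1, hI2]
  -- negativity of the second integral
  have hint : Integrable (fun t => Real.exp ((k+k)*t) * F'' (c⁻¹ * Real.exp (k*t))) μ :=
    (key k k F' F'' hdF' hF'c hF''cont L γ hγ hGF' hGF'' c⁻¹ (by positivity)).1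
  have hint2 : Integrable (fun t => Real.exp (2*k*t) * F'' (Real.exp (k*t) / c)) μ := by
    have : (fun t => Real.exp ((k+k)*t) * F'' (c⁻¹ * Real.exp (k*t)))
        = fun t => Real.exp (2*k*t) * F'' (Real.exp (k*t) / c) := by
      funext t
      rw [inv_mul_eq_div, show (k+k)*t = 2*k*t by ring]
    rwa [this] at hint
  have hneg : (∫ t, Real.exp (2*k*t) * F'' (Real.exp (k*t) / c) ∂μ) < 0 := by
    have hpos : ∀ t : ℝ, 0 < -(Real.exp (2*k*t) * F'' (Real.exp (k*t) / c)) := by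
      intro t
      have : F'' (Real.exp (k*t) / c) < 0 := hF''neg _ (by positivity)
      have he : (0:ℝ) < Real.exp (2*k*t) := Real.exp_pos _
      nlinarith
    have h0 : 0 < ∫ t, -(Real.exp (2*k*t) * F'' (Real.exp (k*t) / c)) ∂μ := by
      rw [integral_pos_iff_support_of_nonneg (fun t => (hpos t).le) hint2.neg]
      have : Function.support (fun t => -(Real.exp (2*k*t) * F'' (Real.exp (k*t) / c))) = univ :=
        Set.eq_univ_of_forall fun t => (hpos t).ne'
      rw [this]
      simp [hμ]
    rw [integral_neg] at h0
    linarith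
  -- final arithmetic
  set I1 := ∫ t, Real.exp (k*t) * F' (Real.exp (k*t) / c) ∂μ
  set I2 := ∫ t, Real.exp (2*k*t) * F'' (Real.exp (k*t) / c) ∂μ
  have hI2ne : I2 ≠ 0 := ne_of_lt hneg
  field_simp
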